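/- arXiv:0802.1180 — 3 statements merged into one kernel-verified Lean document; each statement's English description precedes it below -/
import Mathlib

section
/- Lemma 5.1 (operator estimate): Suppose α_{λμ} ≥ 0 are functions on R^d for μ ∈ Λ₁ and λ in a finite index set Λ′, and Σ_{μ∈Λ₁} sup_{λ∈Λ′} α_{λμ}(x) ≤ C(x) for all x. Then there exists an operator K in the class 𝔎 (bounded, positivity-preserving, K(1) ≤ 1) such that for every family of bounded Borel functions f_λ on R^d, h² Σ_{μ∈Λ₁, λ∈Λ′} α_{λμ}(x) (δ_μ f_λ(x))² ≤ 4 C(x) · K(Σ_{λ∈Λ′} f_λ²)(x) for all x ∈ R^d. -/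
/-!
With `S_μ(x) = sup_λ α_{λμ}(x)`, the elementary bound `(a - b)² ≤ 2 (a² + b²)` gives
`h² Σ_λ α_{λμ}(x) (δ_μ f_λ(x))² ≤ 2 S_μ(x) (g(x + hμ) + g(x))` with `g = Σ_λ f_λ²`.
The right-hand side summed over `μ` is `4 C(x)` times the average
`K g(x) = Σ_μ S_μ(x) (g(x + hμ) + g(x)) / (2 C(x))`, which preserves nonnegativity and satisfies
`K 1 ≤ 1` because `Σ_μ S_μ ≤ C`.
-/

open Finset

lemma sq_mul_div_sq_le (a h : ℝ) : h ^ 2 * (a / h) ^ 2 ≤ a ^ 2 := by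
  rcases eq_or_ne h 0 with rfl | hh
  · simpa using sq_nonneg a
  · rw [div_pow, mul_div_cancel₀ _ (pow_ne_zero 2 hh)]

lemma sq_mul_sum_mul_sq_sub_div_le {ι : Type*} {s : Finset ι} {a : ι → ℝ} {b : ℝ}
    (ha : ∀ i ∈ s, 0 ≤ a i) (hab : ∀ i ∈ s, a i ≤ b) (h : ℝ) (u v : ι → ℝ) :
    h ^ 2 * ∑ i ∈ s, a i * ((u i - v i) / h) ^ 2
      ≤ 2 * b * (∑ i ∈ s, u i ^ 2 + ∑ i ∈ s, v i ^ 2) := by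
  rw [mul_sum, ← sum_add_distrib, mul_sum]
  refine sum_le_sum fun i hi => ?_
  calc h ^ 2 * (a i * ((u i - v i) / h) ^ 2) = a i * (h ^ 2 * ((u i - v i) / h) ^ 2) := by ring
    _ ≤ a i * (2 * (u i ^ 2 + v i ^ 2)) := by
        refine mul_le_mul_of_nonneg_left ?_ (ha i hi)
        simpa [sub_eq_add_neg] using (sq_mul_div_sq_le (u i - v i) h).trans add_sq_le
    _ ≤ b * (2 * (u i ^ 2 + v i ^ 2)) := by gcongr; exact hab i hi
    _ = 2 * b * (u i ^ 2 + v i ^ 2) := by ring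

section ShiftAverage

variable {E : Type*} [Add E] [SMul ℝ E] (Λ₁ : Finset E) (h : ℝ) (w : E → E → ℝ) (C : E → ℝ)

/-- Vanishes where `C x = 0`, since division by zero gives `0`. -/
noncomputable def shiftAverage (f : E → ℝ) (x : E) : ℝ :=
  (∑ μ ∈ Λ₁, w μ x * (f (x + h • μ) + f x)) / (2 * C x)

variable {Λ₁ h w C}

lemma shiftAverage_nonneg (hw : ∀ μ x, 0 ≤ w μ x) (hC : ∀ x, 0 ≤ C x) {f : E → ℝ}
    (hf : ∀ y, 0 ≤ f y) (x : E) : 0 ≤ shiftAverage Λ₁ h w C f x :=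
  div_nonneg (sum_nonneg fun μ _ => mul_nonneg (hw μ x) (add_nonneg (hf _) (hf _)))
    (mul_nonneg zero_le_two (hC x))

lemma shiftAverage_one_le (hw : ∀ μ x, 0 ≤ w μ x) (hC : ∀ x, ∑ μ ∈ Λ₁, w μ x ≤ C x) (x : E) :
    shiftAverage Λ₁ h w C (fun _ => 1) x ≤ 1 := by
  have hsum : ∑ μ ∈ Λ₁, w μ x * (1 + 1) = 2 * ∑ μ ∈ Λ₁, w μ x := by
    rw [mul_sum]; exact sum_congr rfl fun μ _ => by ring
  have hw₀ : 0 ≤ ∑ μ ∈ Λ₁, w μ x := sum_nonneg fun μ _ => hw μ x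
  simp only [shiftAverage, hsum]
  exact div_le_one_of_le₀ (by linarith [hC x]) (by linarith [hC x])

lemma four_mul_mul_shiftAverage (hw : ∀ μ x, 0 ≤ w μ x) (hC : ∀ x, ∑ μ ∈ Λ₁, w μ x ≤ C x)
    (f : E → ℝ) (x : E) :
    4 * C x * shiftAverage Λ₁ h w C f x = 2 * ∑ μ ∈ Λ₁, w μ x * (f (x + h • μ) + f x) := by
  rcases eq_or_ne (C x) 0 with hCx | hCx
  · have hw0 : ∀ μ ∈ Λ₁, w μ x = 0 :=
      (sum_eq_zero_iff_of_nonneg fun μ _ => hw μ x).mp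
        (le_antisymm (hCx ▸ hC x) (sum_nonneg fun μ _ => hw μ x))
    rw [sum_eq_zero fun μ hμ => by rw [hw0 μ hμ, zero_mul]]
    simp [shiftAverage, hCx]
  · unfold shiftAverage
    field_simp
    ring

end ShiftAverage

theorem operator_estimate_of_dominated_coefficients_general (d : ℕ) {ι : Type*}
    (Λ₁ : Finset (Fin d → ℝ))
    (h : ℝ)
    (Λ' : Finset ι) (hne : Λ'.Nonempty)
    (α : ι → (Fin d → ℝ) → (Fin d → ℝ) → ℝ)
    (hα : ∀ lam μ x, 0 ≤ α lam μ x)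
    (C : (Fin d → ℝ) → ℝ)
    (hC : ∀ x, ∑ μ ∈ Λ₁, (Λ'.sup' hne fun lam => α lam μ x) ≤ C x) :
    ∃ K : (((Fin d) → ℝ) → ℝ) → (((Fin d) → ℝ) → ℝ),
      (∀ f, (∀ x, 0 ≤ f x) → ∀ x, 0 ≤ K f x) ∧
      (∀ x, K (fun _ => (1 : ℝ)) x ≤ 1) ∧
      (∀ f : ι → (Fin d → ℝ) → ℝ, ∀ x,
        h ^ 2 * ∑ μ ∈ Λ₁, ∑ lam ∈ Λ',
            α lam μ x * ((f lam (x + h • μ) - f lam x) / h) ^ 2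
          ≤ 4 * C x * K (fun y => ∑ lam ∈ Λ', f lam y ^ 2) x) := by
  set S := fun μ x => Λ'.sup' hne fun lam => α lam μ x
  have hαS : ∀ lam ∈ Λ', ∀ μ x, α lam μ x ≤ S μ x := fun lam hlam μ x =>
    le_sup' (fun lam => α lam μ x) hlam
  have hS : ∀ μ x, 0 ≤ S μ x := fun μ x =>
    (hα _ μ x).trans (hαS _ hne.choose_spec μ x)
  have hC₀ : ∀ x, 0 ≤ C x := fun x => (sum_nonneg fun μ _ => hS μ x).trans (hC x)
  refine ⟨shiftAverage Λ₁ h S C, fun f hf => shiftAverage_nonneg hS hC₀ hf,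
    shiftAverage_one_le hS hC, fun f x => ?_⟩
  rw [four_mul_mul_shiftAverage hS hC, mul_sum, mul_sum]
  refine sum_le_sum fun μ _ => ?_
  rw [← mul_assoc]
  exact sq_mul_sum_mul_sq_sub_div_le (fun lam _ => hα lam μ x) (fun lam hlam => hαS lam hlam μ x)
    h _ _

/-- Lemma 5.1: there is an operator `K` of class `𝔎` such that
`h² Σ_{μ,λ} α_{λμ} (δ_μ f_λ)² ≤ 4C · K(Σ_λ f_λ²)` pointwise. -/
theorem operator_estimate_of_dominated_coefficients (d : ℕ) {ι : Type*}
    (Λ₁ : Finset (Fin d → ℝ)) (h0 : (0 : Fin d → ℝ) ∉ Λ₁)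
    (h : ℝ) (hh : 0 < h)
    (Λ' : Finset ι) (hne : Λ'.Nonempty)
    (α : ι → (Fin d → ℝ) → (Fin d → ℝ) → ℝ)
    (hα : ∀ lam μ x, 0 ≤ α lam μ x)
    (C : (Fin d → ℝ) → ℝ)
    (hC : ∀ x, ∑ μ ∈ Λ₁, (Λ'.sup' hne fun lam => α lam μ x) ≤ C x) :
    ∃ K : (((Fin d) → ℝ) → ℝ) → (((Fin d) → ℝ) → ℝ),
      (∀ f, (∀ x, 0 ≤ f x) → ∀ x, 0 ≤ K f x) ∧
      (∀ x, K (fun _ => (1 : ℝ)) x ≤ 1) ∧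
      (∀ f : ι → (Fin d → ℝ) → ℝ, ∀ x,
        h ^ 2 * ∑ μ ∈ Λ₁, ∑ lam ∈ Λ',
            α lam μ x * ((f lam (x + h • μ) - f lam x) / h) ^ 2
          ≤ 4 * C x * K (fun y => ∑ lam ∈ Λ', f lam y ^ 2) x) :=
  operator_estimate_of_dominated_coefficients_general d Λ₁ h Λ' hne α hα C hC
end

section
/- Maximum principle (special case): Let Q ⊂ R^d, Q° = {x ∈ Q : x+λh ∈ Q for all λ ∈ Λ₁}, and let χ_λ ≥ 0 be bounded Borel functions on [0,T]×R^d. Suppose v is bounded on [0,T]×Q, v(·,x) is measurable, the derivative D_t v exists on [0,T]×Q°, and D_t v(t,x) ≤ h^{-1} Σ_{λ∈Λ₁} χ_λ(t,x) δ_λ v(t,x) on [0,T]×Q°, while v ≤ 0 on ({0}×Q) ∪ ([0,T]×(Q∖Q°)). Then v ≤ 0 on [0,T]×Q. -/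
/-!
Put `C = |Λ₁| M / h²`, where `0 ≤ χ ≤ M`. At a point `x ∈ Q°`, if `v(s, ·) ≤ ψ(s)` on `Q` then the
scheme gives `D_t v(s, x) ≤ C (ψ(s) - v(s, x))`, and comparing `e^{Cs} v(s, x)` with a primitive of
`C ψ` yields `v(t, x) ≤ C ∫₀ᵗ ψ`; off `Q°` this holds by the boundary condition. Starting from
`v ≤ N` and iterating gives `v(t, x) ≤ N (Ct)ⁿ / n!` for every `n`, hence `v ≤ 0`.
-/

open Set Filter Topology
open scoped Nat

/-- The `n`-th Picard iterate of the constant `N` under `ψ ↦ C ∫₀ᵗ ψ`. -/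
noncomputable def picardBound (N C : ℝ) (n : ℕ) (t : ℝ) : ℝ := N * (C * t) ^ n / n !

lemma picardBound_zero (N C t : ℝ) : picardBound N C 0 t = N := by
  simp [picardBound]

lemma picardBound_succ_zero (N C : ℝ) (n : ℕ) : picardBound N C (n + 1) 0 = 0 := by
  simp [picardBound]

lemma picardBound_nonneg {N C t : ℝ} (hN : 0 ≤ N) (hC : 0 ≤ C) (ht : 0 ≤ t) (n : ℕ) :
    0 ≤ picardBound N C n t := by
  unfold picardBound; positivity

lemma hasDerivAt_picardBound_succ (N C : ℝ) (n : ℕ) (t : ℝ) :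
    HasDerivAt (picardBound N C (n + 1)) (C * picardBound N C n t) t := by
  have h := (((hasDerivAt_id t).const_mul C).fun_pow (n + 1)).mul_const (N / (n + 1)!)
  refine h.congr_deriv ?_ |>.congr_of_eventuallyEq (Eventually.of_forall fun s ↦ ?_)
  · simp only [picardBound, Nat.factorial_succ, Nat.cast_mul, id, add_tsub_cancel_right]
    field_simp
  · simp only [picardBound, id]
    ring

lemma tendsto_picardBound (N C t : ℝ) :
    Tendsto (fun n ↦ picardBound N C n t) atTop (𝓝 0) := by
  simpa [picardBound, mul_div_assoc] using
    (FloorSemiring.tendsto_pow_div_factorial_atTop (C * t)).const_mul N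

theorem le_of_hasDerivAt_le_mul_sub {f f' g G : ℝ → ℝ} {C t : ℝ} (hC : 0 ≤ C) (ht : 0 ≤ t)
    (hf : ∀ s ∈ Icc 0 t, HasDerivAt f (f' s) s)
    (hG : ∀ s ∈ Icc 0 t, HasDerivAt G (C * g s) s)
    (hg : ∀ s ∈ Icc 0 t, 0 ≤ g s) (hf' : ∀ s ∈ Icc 0 t, f' s ≤ C * (g s - f s))
    (hfG : f 0 ≤ G 0) (hG0 : 0 ≤ G 0) : f t ≤ G t := by
  -- `exp (C s) * f s` grows at rate at most `C exp (C s) g s ≤ C exp (C t) g s`.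
  have hF : ∀ s ∈ Icc 0 t, HasDerivAt (fun s ↦ Real.exp (C * s) * f s)
      (C * Real.exp (C * s) * f s + Real.exp (C * s) * f' s) s := fun s hs ↦ by
    refine ((((hasDerivAt_id s).const_mul C).exp).fun_mul (hf s hs)).congr_deriv ?_
    simp only [id, mul_one]
    ring
  have hB : ∀ s ∈ Icc 0 t, HasDerivAt (fun s ↦ Real.exp (C * t) * G s)
      (Real.exp (C * t) * (C * g s)) s := fun s hs ↦ (hG s hs).const_mul _
  have hexp_mono : ∀ s ∈ Icc 0 t, Real.exp (C * s) ≤ Real.exp (C * t) := fun s hs ↦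
    Real.exp_le_exp.mpr (mul_le_mul_of_nonneg_left hs.2 hC)
  have hcomp := image_le_of_deriv_right_le_deriv_boundary
    (fun s hs ↦ (hF s hs).continuousAt.continuousWithinAt)
    (fun s hs ↦ (hF s (Ico_subset_Icc_self hs)).hasDerivWithinAt)
    (?_ : Real.exp (C * 0) * f 0 ≤ Real.exp (C * t) * G 0)
    (fun s hs ↦ (hB s hs).continuousAt.continuousWithinAt)
    (fun s hs ↦ (hB s (Ico_subset_Icc_self hs)).hasDerivWithinAt) ?_ (right_mem_Icc.2 ht)
  · exact le_of_mul_le_mul_left hcomp (Real.exp_pos _)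
  · rw [mul_zero, Real.exp_zero, one_mul]
    exact hfG.trans (le_mul_of_one_le_left hG0 (Real.one_le_exp (mul_nonneg hC ht)))
  · intro s hs
    have hs' := Ico_subset_Icc_self hs
    calc C * Real.exp (C * s) * f s + Real.exp (C * s) * f' s
        ≤ Real.exp (C * s) * (C * g s) := by
          nlinarith [hf' s hs', Real.exp_pos (C * s)]
      _ ≤ Real.exp (C * t) * (C * g s) :=
          mul_le_mul_of_nonneg_right (hexp_mono s hs') (mul_nonneg hC (hg s hs'))

theorem inv_mul_sum_mul_sub_div_le {ι : Type*} (s : Finset ι) {w u : ι → ℝ} {u₀ ψ M h : ℝ}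
    (hh : 0 < h) (hw₀ : ∀ i ∈ s, 0 ≤ w i) (hwM : ∀ i ∈ s, w i ≤ M) (hu : ∀ i ∈ s, u i ≤ ψ)
    (hu₀ : u₀ ≤ ψ) :
    h⁻¹ * ∑ i ∈ s, w i * ((u i - u₀) / h) ≤ s.card * M / h ^ 2 * (ψ - u₀) := by
  have hterm : ∀ i ∈ s, w i * ((u i - u₀) / h) ≤ M * (ψ - u₀) / h := fun i hi ↦ by
    rw [← mul_div_assoc, div_le_div_iff_of_pos_right hh]
    calc w i * (u i - u₀) ≤ w i * (ψ - u₀) := by gcongr; exacts [hw₀ i hi, hu i hi]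
      _ ≤ M * (ψ - u₀) := by gcongr; exact hwM i hi
  calc h⁻¹ * ∑ i ∈ s, w i * ((u i - u₀) / h)
      ≤ h⁻¹ * (s.card * (M * (ψ - u₀) / h)) := by
        gcongr
        simpa using Finset.sum_le_card_nsmul s _ _ hterm
    _ = s.card * M / h ^ 2 * (ψ - u₀) := by
        field_simp

section

variable {E : Type*} [AddCommGroup E] [Module ℝ E] {Λ₁ : Finset E} {h T M N : ℝ}
  {Q Qo : Set E} {χ : E → ℝ → E → ℝ} {v v' : ℝ → E → ℝ}

theorem le_picardBound (hh : 0 < h) (hM : 0 ≤ M) (hN : 0 ≤ N)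
    (hQo : ∀ x ∈ Qo, ∀ lam ∈ Λ₁, x + h • lam ∈ Q)
    (hχ₀ : ∀ lam ∈ Λ₁, ∀ t x, 0 ≤ χ lam t x) (hχM : ∀ lam ∈ Λ₁, ∀ t x, χ lam t x ≤ M)
    (hvN : ∀ t ∈ Icc 0 T, ∀ x ∈ Q, v t x ≤ N)
    (hderiv : ∀ t ∈ Icc 0 T, ∀ x ∈ Qo, HasDerivAt (fun s ↦ v s x) (v' t x) t)
    (hineq : ∀ t ∈ Icc 0 T, ∀ x ∈ Qo,
      v' t x ≤ h⁻¹ * ∑ lam ∈ Λ₁, χ lam t x * ((v t (x + h • lam) - v t x) / h))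
    (hbc0 : ∀ x ∈ Q, v 0 x ≤ 0) (hbc : ∀ t ∈ Icc 0 T, ∀ x ∈ Q \ Qo, v t x ≤ 0) (n : ℕ) :
    ∀ t ∈ Icc 0 T, ∀ x ∈ Q, v t x ≤ picardBound N (Λ₁.card * M / h ^ 2) n t := by
  set C := Λ₁.card * M / h ^ 2
  have hC : 0 ≤ C := by positivity
  induction n with
  | zero => simpa only [picardBound_zero] using hvN
  | succ n ih =>
    intro t ht x hx
    by_cases hxo : x ∈ Qo
    · have hsub : Icc 0 t ⊆ Icc 0 T := Icc_subset_Icc_right ht.2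
      refine le_of_hasDerivAt_le_mul_sub hC ht.1 (fun s hs ↦ hderiv s (hsub hs) x hxo)
        (fun s _ ↦ hasDerivAt_picardBound_succ N C n s)
        (fun s hs ↦ picardBound_nonneg hN hC hs.1 n) (fun s hs ↦ ?_)
        (by simpa only [picardBound_succ_zero] using hbc0 x hx) (picardBound_nonneg hN hC le_rfl _)
      exact (hineq s (hsub hs) x hxo).trans <| inv_mul_sum_mul_sub_div_le Λ₁ hh
        (fun lam hl ↦ hχ₀ lam hl s x) (fun lam hl ↦ hχM lam hl s x)
        (fun lam hl ↦ ih s (hsub hs) _ (hQo x hxo lam hl)) (ih s (hsub hs) x hx)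
    · exact (hbc t ht x ⟨hx, hxo⟩).trans (picardBound_nonneg hN hC ht.1 _)

end

theorem discrete_maximum_principle_special_general (d : ℕ)
    (Λ₁ : Finset (Fin d → ℝ))
    (h T : ℝ) (hh : 0 < h)
    (Q : Set (Fin d → ℝ))
    (Qo : Set (Fin d → ℝ))
    (hQo : Qo = {x ∈ Q | ∀ lam ∈ Λ₁, x + h • lam ∈ Q})
    (χ : (Fin d → ℝ) → ℝ → (Fin d → ℝ) → ℝ)
    (hχpos : ∀ lam ∈ Λ₁, ∀ t x, 0 ≤ χ lam t x)
    (hχbdd : ∃ M, ∀ lam ∈ Λ₁, ∀ t x, |χ lam t x| ≤ M)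
    (v : ℝ → (Fin d → ℝ) → ℝ)
    (hvbdd : ∃ M, ∀ t ∈ Icc (0:ℝ) T, ∀ x ∈ Q, |v t x| ≤ M)
    (v' : ℝ → (Fin d → ℝ) → ℝ)
    (hderiv : ∀ t ∈ Icc (0:ℝ) T, ∀ x ∈ Qo, HasDerivAt (fun s => v s x) (v' t x) t)
    (hineq : ∀ t ∈ Icc (0:ℝ) T, ∀ x ∈ Qo,
      v' t x ≤ h⁻¹ * ∑ lam ∈ Λ₁, χ lam t x * ((v t (x + h • lam) - v t x) / h))
    (hbc0 : ∀ x ∈ Q, v 0 x ≤ 0)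
    (hbc : ∀ t ∈ Icc (0:ℝ) T, ∀ x ∈ Q \ Qo, v t x ≤ 0) :
    ∀ t ∈ Icc (0:ℝ) T, ∀ x ∈ Q, v t x ≤ 0 := by
  obtain ⟨N, hN⟩ := hvbdd
  obtain ⟨M, hM⟩ := hχbdd
  have hQo' : ∀ x ∈ Qo, ∀ lam ∈ Λ₁, x + h • lam ∈ Q := fun x hx ↦ (hQo ▸ hx).2
  have hbound n := le_picardBound hh (le_max_right M 0) (le_max_right N 0) hQo' hχpos
    (fun lam hl t x ↦ (le_abs_self _).trans ((hM lam hl t x).trans (le_max_left _ _)))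
    (fun t ht x hx ↦ (le_abs_self _).trans ((hN t ht x hx).trans (le_max_left _ _)))
    hderiv hineq hbc0 hbc n
  intro t ht x hx
  exact ge_of_tendsto' (tendsto_picardBound _ _ t) fun n ↦ hbound n t ht x hx

/-- maximum principle (special case, no zero-order term):
if `D_t v ≤ h⁻¹ Σ_λ χ_λ δ_λ v` on `[0,T]×Q°` and `v ≤ 0` on the parabolic
boundary, then `v ≤ 0` on `[0,T]×Q`. -/
theorem discrete_maximum_principle_special (d : ℕ)
    (Λ₁ : Finset (Fin d → ℝ)) (h0 : (0 : Fin d → ℝ) ∉ Λ₁)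
    (h T : ℝ) (hh : 0 < h) (hT : 0 < T)
    (Q : Set (Fin d → ℝ))
    (Qo : Set (Fin d → ℝ))
    (hQo : Qo = {x ∈ Q | ∀ lam ∈ Λ₁, x + h • lam ∈ Q})
    (χ : (Fin d → ℝ) → ℝ → (Fin d → ℝ) → ℝ)
    (hχpos : ∀ lam ∈ Λ₁, ∀ t x, 0 ≤ χ lam t x)
    (hχbdd : ∃ M, ∀ lam ∈ Λ₁, ∀ t x, |χ lam t x| ≤ M)
    (hχmeas : ∀ lam ∈ Λ₁, Measurable (Function.uncurry (χ lam)))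
    (v : ℝ → (Fin d → ℝ) → ℝ)
    (hvbdd : ∃ M, ∀ t ∈ Icc (0:ℝ) T, ∀ x ∈ Q, |v t x| ≤ M)
    (hvmeas : ∀ x, Measurable fun t => v t x)
    (v' : ℝ → (Fin d → ℝ) → ℝ)
    (hderiv : ∀ t ∈ Icc (0:ℝ) T, ∀ x ∈ Qo, HasDerivAt (fun s => v s x) (v' t x) t)
    (hineq : ∀ t ∈ Icc (0:ℝ) T, ∀ x ∈ Qo,
      v' t x ≤ h⁻¹ * ∑ lam ∈ Λ₁, χ lam t x * ((v t (x + h • lam) - v t x) / h))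
    (hbc0 : ∀ x ∈ Q, v 0 x ≤ 0)
    (hbc : ∀ t ∈ Icc (0:ℝ) T, ∀ x ∈ Q \ Qo, v t x ≤ 0) :
    ∀ t ∈ Icc (0:ℝ) T, ∀ x ∈ Q, v t x ≤ 0 :=
  discrete_maximum_principle_special_general d Λ₁ h T hh Q Qo hQo χ hχpos hχbdd v hvbdd v' hderiv
    hineq hbc0 hbc
end

section
/- Maximum principle with zero-order term and forcing (Lemma 3.1): Under Assumptions as below, if D_t v ≤ L v + C·v̄₊ + F on [0,T]×Q°, where Lφ = h^{-1}Σ_{λ∈Λ₁} χ_λ δ_λ φ − cφ, v̄(t) = sup_{x∈Q} v(t,x), F(t) ≥ 0 integrable, C(t,x) ≥ 0 bounded, then for all t ∈ [0,T]: v̄(t) ≤ G(t)e^{νt} + ∫₀ᵗ F(s) e^{ν(t−s)} ds, where ν = sup_{[0,T]×Q°}(C−c) and G(t) = sup over the parabolic boundary δ′Q_t = ({0}×Q) ∪ ([0,t]×(Q∖Q°)) of e^{−νs} v₊(s,y). -/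
open Set Filter Topology MeasureTheory intervalIntegral Real
open scoped Nat

/-!
After the rescaling `w = e^{-νs} v`, at every point `x ∈ Q°` where `w(s, x) ≥ 0` one has the
drift bound `∂ₛ w ≤ K (P − w(s, x)) + e^{-νs} F` for every upper bound `P` of `w(s, ·)` on `Q`:
the finite differences are at most `(P − w)/h²`, the term `C v̄₊` is at most `C` times the bound,
and the remaining zero-order term `(C − c − ν) v` is nonpositive.

Since `Q` may be infinite, `sup_Q w(s, ·)` need be neither attained nor measurable in `s`, so
instead of a Grönwall argument for the supremum we run a Picard iteration: if
`w ≤ G + ∫₀ˢ e^{-νr} F + M (Ks)ⁿ/n!` on `[0, t] × Q`, the same holds with `n + 1`. Indeed, on a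
maximal interval where `w(·, x)` lies above the new barrier, the drift bound with `P` the old
barrier makes `w(·, x)` grow no faster than the new one. Letting `n → ∞` gives the claim.
-/

theorem nonpos_of_forall_pos_Ioc_le {D : ℝ → ℝ} {a b : ℝ} (hD : ContinuousOn D (Icc a b))
    (ha : D a ≤ 0)
    (hexc : ∀ r t, a ≤ r → r < t → t ≤ b → (∀ s ∈ Ioc r t, 0 < D s) → D t ≤ D r) :
    ∀ t ∈ Icc a b, D t ≤ 0 := by
  intro t ht
  by_contra! hDt
  have hclosed : IsClosed (Icc a t ∩ D ⁻¹' Iic 0) :=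
    (hD.mono (Icc_subset_Icc_right ht.2)).preimage_isClosed_of_isClosed isClosed_Icc isClosed_Iic
  obtain ⟨r, ⟨hr, hDr⟩, hrmax⟩ := (isCompact_Icc.of_isClosed_subset hclosed
    inter_subset_left).exists_isGreatest ⟨a, left_mem_Icc.2 ht.1, ha⟩
  have hrt : r < t := hr.2.lt_of_ne (by rintro rfl; exact hDt.not_ge hDr)
  have hpos : ∀ s ∈ Ioc r t, 0 < D s := fun s hs => by
    by_contra! hDs
    exact (hrmax ⟨⟨hr.1.trans hs.1.le, hs.2⟩, hDs⟩).not_gt hs.1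
  exact hDt.not_ge ((hexc r t hr.1 hrt ht.2 hpos).trans hDr)

noncomputable def expSeriesTerm (M K : ℝ) (n : ℕ) (s : ℝ) : ℝ := M * (K * s) ^ n / n !

section expSeriesTerm

variable (M K : ℝ) (n : ℕ)

theorem continuous_expSeriesTerm : Continuous (expSeriesTerm M K n) := by
  unfold expSeriesTerm; fun_prop

theorem expSeriesTerm_nonneg {M K s : ℝ} (hM : 0 ≤ M) (hK : 0 ≤ K) (hs : 0 ≤ s) :
    0 ≤ expSeriesTerm M K n s := by
  unfold expSeriesTerm; positivity

@[simp] theorem expSeriesTerm_succ_zero : expSeriesTerm M K (n + 1) 0 = 0 := by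
  simp [expSeriesTerm]

theorem hasDerivAt_expSeriesTerm_succ (s : ℝ) :
    HasDerivAt (expSeriesTerm M K (n + 1)) (K * expSeriesTerm M K n s) s := by
  have h := (((hasDerivAt_pow (n + 1) (K * s)).comp s ((hasDerivAt_id' s).const_mul K)).const_mul
    M).div_const ((n + 1)! : ℝ)
  refine h.congr_deriv ?_
  simp only [expSeriesTerm, Nat.factorial_succ, Nat.cast_mul]
  field_simp
  push_cast
  ring

theorem integral_mul_expSeriesTerm (r t : ℝ) :
    ∫ s in r..t, K * expSeriesTerm M K n s =
      expSeriesTerm M K (n + 1) t - expSeriesTerm M K (n + 1) r :=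
  integral_eq_sub_of_hasDerivAt (fun s _ => hasDerivAt_expSeriesTerm_succ M K n s)
    (((continuous_expSeriesTerm M K n).const_mul K).intervalIntegrable r t)

theorem tendsto_expSeriesTerm (s : ℝ) :
    Tendsto (fun n => expSeriesTerm M K n s) atTop (𝓝 0) := by
  simpa [expSeriesTerm, mul_div_assoc] using
    (FloorSemiring.tendsto_pow_div_factorial_atTop (K * s)).const_mul M

end expSeriesTerm

theorem exp_neg_mul_mul_exp_mul (ν s : ℝ) : exp (-ν * s) * exp (ν * s) = 1 := by
  rw [← exp_add]; simp

theorem exp_neg_mul_le_exp_abs_mul {ν s T : ℝ} (hs : s ∈ Icc 0 T) :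
    exp (-ν * s) ≤ exp (|ν| * T) :=
  exp_le_exp.2 (mul_le_mul (neg_le_abs ν) hs.2 hs.1 (abs_nonneg ν))

theorem exp_mul_mul_add_integral_exp_neg_mul (ν G s : ℝ) (F : ℝ → ℝ) :
    exp (ν * s) * (G + ∫ r in 0..s, exp (-ν * r) * F r) =
      G * exp (ν * s) + ∫ r in 0..s, F r * exp (ν * (s - r)) := by
  rw [mul_add, mul_comm (exp _) G, ← intervalIntegral.integral_const_mul]
  congr 1
  refine integral_congr fun r _ => ?_
  rw [← mul_assoc, ← exp_add, mul_comm, show ν * s + -ν * r = ν * (s - r) by ring]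

section Comparison

variable {E : Type*} {Q Qo : Set E} {w w' : ℝ → E → ℝ} {f : ℝ → ℝ} {K G M t₀ : ℝ}

theorem sub_le_expSeriesTerm_sub_add_integral {g g' : ℝ → ℝ} {r t : ℝ} {n : ℕ} (hrt : r ≤ t)
    (hg : ∀ s ∈ Icc r t, HasDerivAt g (g' s) s) (hf : IntervalIntegrable f volume r t)
    (hslope : ∀ s ∈ Ioo r t, g' s ≤ K * expSeriesTerm M K n s + f s) :
    g t - g r ≤ expSeriesTerm M K (n + 1) t - expSeriesTerm M K (n + 1) r + ∫ s in r..t, f s := by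
  have hφ := ((continuous_expSeriesTerm M K n).const_mul K).intervalIntegrable (μ := volume) r t
  have hincr := sub_le_integral_of_hasDeriv_right_of_le hrt (HasDerivAt.continuousOn hg)
    (fun s hs => (hg s (Ioo_subset_Icc_self hs)).hasDerivWithinAt)
    ((intervalIntegrable_iff_integrableOn_Icc_of_le hrt).1 (hφ.add hf)) hslope
  rwa [integral_add hφ hf, integral_mul_expSeriesTerm] at hincr

theorem le_add_integral_add_expSeriesTerm_succ (hK : 0 ≤ K) (hG : 0 ≤ G) (hM : 0 ≤ M)
    (hf : ∀ s ∈ Icc 0 t₀, 0 ≤ f s) (hfint : IntervalIntegrable f volume 0 t₀)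
    (hderiv : ∀ s ∈ Icc 0 t₀, ∀ x ∈ Qo, HasDerivAt (w · x) (w' s x) s)
    (hdrift : ∀ s ∈ Icc 0 t₀, ∀ x ∈ Qo, ∀ P, (∀ y ∈ Q, w s y ≤ P) → 0 ≤ w s x →
      w' s x ≤ K * (P - w s x) + f s)
    (hinit : ∀ x ∈ Q, w 0 x ≤ G) (hbdry : ∀ s ∈ Icc 0 t₀, ∀ x ∈ Q \ Qo, w s x ≤ G) {n : ℕ}
    (ih : ∀ s ∈ Icc 0 t₀, ∀ y ∈ Q, w s y ≤ G + (∫ r in 0..s, f r) + expSeriesTerm M K n s) :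
    ∀ s ∈ Icc 0 t₀, ∀ x ∈ Q, w s x ≤ G + (∫ r in 0..s, f r) + expSeriesTerm M K (n + 1) s := by
  have hH : ∀ s ∈ Icc 0 t₀, 0 ≤ ∫ r in 0..s, f r := fun s hs =>
    integral_nonneg hs.1 fun r hr => hf r ⟨hr.1, hr.2.trans hs.2⟩
  have hφ : ∀ s ∈ Icc 0 t₀, 0 ≤ expSeriesTerm M K (n + 1) s := fun s hs =>
    expSeriesTerm_nonneg _ hM hK hs.1
  have hfsub : ∀ a ∈ Icc 0 t₀, ∀ b ∈ Icc 0 t₀, IntervalIntegrable f volume a b :=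
    fun a ha b hb => hfint.mono_set (uIcc_subset_uIcc (Icc_subset_uIcc ha) (Icc_subset_uIcc hb))
  intro s hs x hx
  by_cases hxo : x ∈ Qo
  swap
  · linarith [hbdry s hs x ⟨hx, hxo⟩, hH s hs, hφ s hs]
  have hwcont : ContinuousOn (w · x) (Icc 0 t₀) := fun s hs =>
    (hderiv s hs x hxo).continuousAt.continuousWithinAt
  have hHcont : ContinuousOn (fun s => ∫ r in 0..s, f r) (Icc 0 t₀) :=
    (continuousOn_primitive_interval' hfint left_mem_uIcc).mono Icc_subset_uIcc
  suffices ∀ s ∈ Icc 0 t₀, w s x - (G + (∫ r in 0..s, f r) + expSeriesTerm M K (n + 1) s) ≤ 0 by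
    linarith [this s hs]
  refine nonpos_of_forall_pos_Ioc_le (hwcont.sub ((continuousOn_const.add hHcont).add
    (continuous_expSeriesTerm M K _).continuousOn)) (by simp [hinit x hx]) ?_
  intro r t hr hrt ht hpos
  have hsub : Icc r t ⊆ Icc 0 t₀ := Icc_subset_Icc hr ht
  have hslope : ∀ s ∈ Ioo r t, w' s x ≤ K * expSeriesTerm M K n s + f s := by
    intro s hs'
    have hs := hsub (Ioo_subset_Icc_self hs')
    -- on the excursion `w s x` exceeds the nonnegative barrier, so the drift bound applies
    have hgap := hpos s (Ioo_subset_Ioc_self hs')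
    have hP := hdrift s hs x hxo _ (ih s hs) (by linarith [hH s hs, hφ s hs])
    have : K * (G + (∫ r in 0..s, f r) + expSeriesTerm M K n s - w s x) ≤
        K * expSeriesTerm M K n s := mul_le_mul_of_nonneg_left (by linarith [hφ s hs]) hK
    linarith
  have hr₀ : r ∈ Icc 0 t₀ := hsub (left_mem_Icc.2 hrt.le)
  have ht₀ : t ∈ Icc 0 t₀ := hsub (right_mem_Icc.2 hrt.le)
  have h0 : (0 : ℝ) ∈ Icc 0 t₀ := left_mem_Icc.2 (hr.trans hr₀.2)
  have hincr := sub_le_expSeriesTerm_sub_add_integral hrt.le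
    (fun s hs => hderiv s (hsub hs) x hxo) (hfsub r hr₀ t ht₀) hslope
  rw [← integral_interval_sub_left (hfsub 0 h0 t ht₀) (hfsub 0 h0 r hr₀)] at hincr
  linarith

theorem le_add_integral_of_drift (hK : 0 ≤ K) (hG : 0 ≤ G)
    (hf : ∀ s ∈ Icc 0 t₀, 0 ≤ f s) (hfint : IntervalIntegrable f volume 0 t₀)
    (hderiv : ∀ s ∈ Icc 0 t₀, ∀ x ∈ Qo, HasDerivAt (w · x) (w' s x) s)
    (hdrift : ∀ s ∈ Icc 0 t₀, ∀ x ∈ Qo, ∀ P, (∀ y ∈ Q, w s y ≤ P) → 0 ≤ w s x →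
      w' s x ≤ K * (P - w s x) + f s)
    (hbdd : ∃ M, ∀ s ∈ Icc 0 t₀, ∀ x ∈ Q, w s x ≤ M)
    (hinit : ∀ x ∈ Q, w 0 x ≤ G) (hbdry : ∀ s ∈ Icc 0 t₀, ∀ x ∈ Q \ Qo, w s x ≤ G) :
    ∀ s ∈ Icc 0 t₀, ∀ x ∈ Q, w s x ≤ G + ∫ r in 0..s, f r := by
  obtain ⟨M, hM⟩ := hbdd
  have hpicard : ∀ n, ∀ s ∈ Icc 0 t₀, ∀ x ∈ Q,
      w s x ≤ G + (∫ r in 0..s, f r) + expSeriesTerm (max M 0) K n s := by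
    intro n
    induction n with
    | zero =>
      intro s hs x hx
      have hH : 0 ≤ ∫ r in 0..s, f r :=
        integral_nonneg hs.1 fun r hr => hf r ⟨hr.1, hr.2.trans hs.2⟩
      simp only [expSeriesTerm, pow_zero, mul_one, Nat.factorial_zero, Nat.cast_one, div_one]
      linarith [hM s hs x hx, le_max_left M 0]
    | succ n ih =>
      exact le_add_integral_add_expSeriesTerm_succ hK hG (le_max_right M 0) hf hfint hderiv
        hdrift hinit hbdry ih
  intro s hs x hx
  have := ge_of_tendsto' ((tendsto_expSeriesTerm (max M 0) K s).const_add _)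
    fun n => hpicard n s hs x hx
  rwa [add_zero] at this

theorem le_exp_mul_add_integral_of_drift {v v' : ℝ → E → ℝ} {F : ℝ → ℝ} {ν : ℝ}
    (hK : 0 ≤ K) (hG : 0 ≤ G)
    (hF : ∀ s ∈ Icc 0 t₀, 0 ≤ F s) (hFint : IntervalIntegrable F volume 0 t₀)
    (hderiv : ∀ s ∈ Icc 0 t₀, ∀ x ∈ Qo, HasDerivAt (v · x) (v' s x) s)
    (hdrift : ∀ s ∈ Icc 0 t₀, ∀ x ∈ Qo, ∀ P, (∀ y ∈ Q, v s y ≤ P) → 0 ≤ v s x →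
      v' s x - ν * v s x ≤ K * (P - v s x) + F s)
    (hbdd : ∃ M, ∀ s ∈ Icc 0 t₀, ∀ x ∈ Q, v s x ≤ M)
    (hinit : ∀ x ∈ Q, v 0 x ≤ G)
    (hbdry : ∀ s ∈ Icc 0 t₀, ∀ x ∈ Q \ Qo, v s x ≤ G * exp (ν * s)) :
    ∀ s ∈ Icc 0 t₀, ∀ x ∈ Q,
      v s x ≤ G * exp (ν * s) + ∫ r in 0..s, F r * exp (ν * (s - r)) := by
  have he := exp_neg_mul_mul_exp_mul ν
  have hw := le_add_integral_of_drift (Qo := Qo) (t₀ := t₀) (w := fun s x => exp (-ν * s) * v s x)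
    (w' := fun s x => exp (-ν * s) * (v' s x - ν * v s x)) (f := fun s => exp (-ν * s) * F s)
    hK hG (fun s hs => mul_nonneg (exp_pos _).le (hF s hs))
    (hFint.continuousOn_mul (by fun_prop))
    (fun s hs x hx => (((hasDerivAt_id' s).const_mul (-ν)).exp.mul (hderiv s hs x hx)).congr_deriv
      (by ring))
    ?drift ?bdd (by simpa using hinit) ?bdry
  case drift =>
    intro s hs x hx P hP hx0
    have hvP : ∀ y ∈ Q, v s y ≤ exp (ν * s) * P := fun y hy => calc
      v s y = exp (ν * s) * (exp (-ν * s) * v s y) := by linear_combination (-v s y) * he s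
      _ ≤ exp (ν * s) * P := mul_le_mul_of_nonneg_left (hP y hy) (exp_pos _).le
    have hv := hdrift s hs x hx _ hvP ((mul_nonneg_iff_of_pos_left (exp_pos _)).1 hx0)
    calc exp (-ν * s) * (v' s x - ν * v s x)
        ≤ exp (-ν * s) * (K * (exp (ν * s) * P - v s x) + F s) :=
          mul_le_mul_of_nonneg_left hv (exp_pos _).le
      _ = K * (P - exp (-ν * s) * v s x) + exp (-ν * s) * F s := by
          linear_combination K * P * he s
  case bdd =>
    obtain ⟨M, hM⟩ := hbdd
    refine ⟨exp (|ν| * t₀) * max M 0, fun s hs x hx => ?_⟩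
    calc exp (-ν * s) * v s x ≤ exp (-ν * s) * max M 0 :=
          mul_le_mul_of_nonneg_left ((hM s hs x hx).trans (le_max_left _ _)) (exp_pos _).le
      _ ≤ exp (|ν| * t₀) * max M 0 :=
          mul_le_mul_of_nonneg_right (exp_neg_mul_le_exp_abs_mul hs) (le_max_right _ _)
  case bdry =>
    intro s hs x hx
    calc exp (-ν * s) * v s x ≤ exp (-ν * s) * (G * exp (ν * s)) :=
          mul_le_mul_of_nonneg_left (hbdry s hs x hx) (exp_pos _).le
      _ = G := by linear_combination G * he s
  intro s hs x hx
  calc v s x = exp (ν * s) * (exp (-ν * s) * v s x) := by linear_combination (-v s x) * he s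
    _ ≤ exp (ν * s) * (G + ∫ r in 0..s, exp (-ν * r) * F r) :=
        mul_le_mul_of_nonneg_left (hw s hs x hx) (exp_pos _).le
    _ = G * exp (ν * s) + ∫ r in 0..s, F r * exp (ν * (s - r)) :=
        exp_mul_mul_add_integral_exp_neg_mul ν G s F

end Comparison

theorem le_sSup_image_exp_neg_mul_max_mul_exp {E : Type*} {S : Set (ℝ × E)} {Q : Set E}
    {v : ℝ → E → ℝ} {ν T M : ℝ} (hS : S ⊆ Icc 0 T ×ˢ Q)
    (hM : ∀ s ∈ Icc 0 T, ∀ x ∈ Q, v s x ≤ M) {p : ℝ × E} (hp : p ∈ S) :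
    v p.1 p.2 ≤
      sSup ((fun p : ℝ × E => exp (-ν * p.1) * max (v p.1 p.2) 0) '' S) * exp (ν * p.1) := by
  have hbdd : BddAbove ((fun p : ℝ × E => exp (-ν * p.1) * max (v p.1 p.2) 0) '' S) := by
    refine ⟨exp (|ν| * T) * max M 0, ?_⟩
    rintro _ ⟨q, hq, rfl⟩
    obtain ⟨hq1, hq2⟩ := hS hq
    exact mul_le_mul (exp_neg_mul_le_exp_abs_mul hq1) (max_le_max_right 0 (hM _ hq1 _ hq2))
      (le_max_right _ _) (exp_pos _).le
  calc v p.1 p.2 ≤ max (v p.1 p.2) 0 := le_max_left _ _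
    _ = exp (-ν * p.1) * max (v p.1 p.2) 0 * exp (ν * p.1) := by
        rw [mul_right_comm, exp_neg_mul_mul_exp_mul, one_mul]
    _ ≤ _ := mul_le_mul_of_nonneg_right (le_csSup hbdd ⟨p, hp, rfl⟩) (exp_pos _).le

section FiniteDifference

variable {E : Type*} [AddCommGroup E] [Module ℝ E] {Λ : Finset E} {h Mχ P : ℝ} {χ u : E → ℝ}
  {x : E}

theorem inv_mul_sum_mul_sub_div_le_s9 (hh : 0 < h) (hχ0 : ∀ lam ∈ Λ, 0 ≤ χ lam)
    (hχM : ∀ lam ∈ Λ, χ lam ≤ Mχ) (hP : ∀ lam ∈ Λ, u (x + h • lam) ≤ P) (hx : u x ≤ P) :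
    h⁻¹ * ∑ lam ∈ Λ, χ lam * ((u (x + h • lam) - u x) / h) ≤
      Λ.card * Mχ / h ^ 2 * (P - u x) := by
  have hterm : ∀ lam ∈ Λ, χ lam * ((u (x + h • lam) - u x) / h) ≤ Mχ * ((P - u x) / h) :=
    fun lam hl => (mul_le_mul_of_nonneg_left (by gcongr; exact hP lam hl) (hχ0 lam hl)).trans
      (mul_le_mul_of_nonneg_right (hχM lam hl) (div_nonneg (sub_nonneg.2 hx) hh.le))
  calc h⁻¹ * ∑ lam ∈ Λ, χ lam * ((u (x + h • lam) - u x) / h)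
      ≤ h⁻¹ * (Λ.card * (Mχ * ((P - u x) / h))) := by
        gcongr
        simpa using Finset.sum_le_card_nsmul Λ _ _ hterm
    _ = Λ.card * Mχ / h ^ 2 * (P - u x) := by field_simp

theorem sub_mul_le_of_discrete_ineq {MC ν c C V F u' : ℝ} (hh : 0 < h)
    (hχ0 : ∀ lam ∈ Λ, 0 ≤ χ lam) (hχM : ∀ lam ∈ Λ, χ lam ≤ Mχ) (hC0 : 0 ≤ C) (hCM : C ≤ MC)
    (hCc : C - c ≤ ν)
    (hineq : u' ≤ h⁻¹ * ∑ lam ∈ Λ, χ lam * ((u (x + h • lam) - u x) / h) - c * u x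
      + C * max V 0 + F)
    (hP : ∀ lam ∈ Λ, u (x + h • lam) ≤ P) (hx : u x ≤ P) (hV : V ≤ P) (hx0 : 0 ≤ u x) :
    u' - ν * u x ≤ (Λ.card * Mχ / h ^ 2 + MC) * (P - u x) + F := by
  have hsum := inv_mul_sum_mul_sub_div_le_s9 hh hχ0 hχM hP hx
  have hmax : C * max V 0 ≤ C * P := mul_le_mul_of_nonneg_left (max_le hV (hx0.trans hx)) hC0
  have hzero : (C - c - ν) * u x ≤ 0 := mul_nonpos_of_nonpos_of_nonneg (by linarith) hx0
  have hgap : C * (P - u x) ≤ MC * (P - u x) := mul_le_mul_of_nonneg_right hCM (by linarith)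
  linarith

end FiniteDifference

theorem discrete_maximum_principle_with_forcing_general (d : ℕ)
    (Λ₁ : Finset (Fin d → ℝ))
    (h T : ℝ) (hh : 0 < h)
    (Q : Set (Fin d → ℝ))
    (Qo : Set (Fin d → ℝ))
    (hQo : Qo = {x ∈ Q | ∀ lam ∈ Λ₁, x + h • lam ∈ Q})
    (χ : (Fin d → ℝ) → ℝ → (Fin d → ℝ) → ℝ)
    (hχpos : ∀ lam ∈ Λ₁, ∀ t x, 0 ≤ χ lam t x)
    (hχbdd : ∃ M, ∀ lam ∈ Λ₁, ∀ t x, |χ lam t x| ≤ M)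
    (cc : ℝ → (Fin d → ℝ) → ℝ)
    (hcbdd : ∃ M, ∀ t x, |cc t x| ≤ M)
    (C : ℝ → (Fin d → ℝ) → ℝ)
    (hCpos : ∀ t x, 0 ≤ C t x) (hCbdd : ∃ M, ∀ t x, |C t x| ≤ M)
    (F : ℝ → ℝ) (hFpos : ∀ t, 0 ≤ F t)
    (hFint : IntervalIntegrable F MeasureTheory.volume 0 T)
    (v : ℝ → (Fin d → ℝ) → ℝ)
    (hvbdd : ∃ M, ∀ t ∈ Icc (0:ℝ) T, ∀ x ∈ Q, |v t x| ≤ M)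
    (v' : ℝ → (Fin d → ℝ) → ℝ)
    (hderiv : ∀ t ∈ Icc (0:ℝ) T, ∀ x ∈ Qo, HasDerivAt (fun s => v s x) (v' t x) t)
    (vbar : ℝ → ℝ) (hvbar : ∀ t, vbar t = sSup ((v t) '' Q))
    (hineq : ∀ t ∈ Icc (0:ℝ) T, ∀ x ∈ Qo,
      v' t x ≤ h⁻¹ * ∑ lam ∈ Λ₁, χ lam t x * ((v t (x + h • lam) - v t x) / h)
              - cc t x * v t x + C t x * max (vbar t) 0 + F t)
    (ν : ℝ)
    (hν : ν = sSup ((fun p : ℝ × (Fin d → ℝ) => C p.1 p.2 - cc p.1 p.2) ''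
        (Icc (0:ℝ) T ×ˢ Qo)))
    (G : ℝ → ℝ)
    (hG : ∀ t, G t = sSup ((fun p : ℝ × (Fin d → ℝ) =>
        Real.exp (-ν * p.1) * max (v p.1 p.2) 0) ''
        (({0} ×ˢ Q) ∪ (Icc (0:ℝ) t ×ˢ (Q \ Qo))))) :
    ∀ t ∈ Icc (0:ℝ) T,
      vbar t ≤ G t * Real.exp (ν * t)
        + ∫ s in (0:ℝ)..t, F s * Real.exp (ν * (t - s)) := by
  obtain ⟨Mχ, hMχ⟩ := hχbdd
  obtain ⟨Mc, hMc⟩ := hcbdd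
  obtain ⟨MC, hMC⟩ := hCbdd
  obtain ⟨Mv, hMv⟩ := hvbdd
  have hvM : ∀ s ∈ Icc 0 T, ∀ x ∈ Q, v s x ≤ Mv := fun s hs x hx => (abs_le.1 (hMv s hs x hx)).2
  have hCc : ∀ s ∈ Icc 0 T, ∀ x ∈ Qo, C s x - cc s x ≤ ν := fun s hs x hx =>
    hν ▸ le_csSup ⟨MC + Mc, by
      rintro _ ⟨p, -, rfl⟩
      linarith [(abs_le.1 (hMC p.1 p.2)).2, (abs_le.1 (hMc p.1 p.2)).1]⟩ ⟨(s, x), ⟨hs, hx⟩, rfl⟩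
  intro t ht
  have hsub : Icc 0 t ⊆ Icc 0 T := Icc_subset_Icc_right ht.2
  have hG0 : 0 ≤ G t := hG t ▸ Real.sSup_nonneg (by rintro _ ⟨p, -, rfl⟩; positivity)
  have hbdry : ∀ p ∈ ({0} ×ˢ Q) ∪ (Icc 0 t ×ˢ (Q \ Qo)), v p.1 p.2 ≤ G t * exp (ν * p.1) :=
    fun p hp => hG t ▸ le_sSup_image_exp_neg_mul_max_mul_exp (union_subset
      (prod_mono (singleton_subset_iff.2 (left_mem_Icc.2 (ht.1.trans ht.2))) subset_rfl)
      (prod_mono hsub sdiff_subset)) hvM hp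
  have hdrift : ∀ s ∈ Icc 0 t, ∀ x ∈ Qo, ∀ P, (∀ y ∈ Q, v s y ≤ P) → 0 ≤ v s x →
      v' s x - ν * v s x ≤ (Λ₁.card * max Mχ 0 / h ^ 2 + MC) * (P - v s x) + F s := by
    intro s hs x hx P hP hx0
    obtain ⟨hxQ, hnbr⟩ : x ∈ Q ∧ ∀ lam ∈ Λ₁, x + h • lam ∈ Q := by rwa [hQo] at hx
    refine sub_mul_le_of_discrete_ineq hh (hχpos · · s x)
      (fun lam hl => ((le_abs_self _).trans (hMχ lam hl s x)).trans (le_max_left _ _))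
      (hCpos s x) ((le_abs_self _).trans (hMC s x)) (hCc s (hsub hs) x hx)
      (hineq s (hsub hs) x hx) (fun lam hl => hP _ (hnbr lam hl)) (hP x hxQ) ?_ hx0
    exact hvbar s ▸ Real.sSup_le (by rintro _ ⟨y, hy, rfl⟩; exact hP y hy) (hx0.trans (hP x hxQ))
  have hbound := le_exp_mul_add_integral_of_drift
    (by have := (abs_nonneg _).trans (hMC 0 0); positivity) hG0 (fun s _ => hFpos s)
    (hFint.mono_set (uIcc_subset_uIcc_left (Icc_subset_uIcc ht)))
    (fun s hs => hderiv s (hsub hs)) hdrift ⟨Mv, fun s hs => hvM s (hsub hs)⟩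
    (fun x hx => by simpa using hbdry (0, x) (Or.inl ⟨rfl, hx⟩))
    (fun s hs x hx => hbdry (s, x) (Or.inr ⟨hs, hx⟩))
  rw [hvbar]
  exact Real.sSup_le (by rintro _ ⟨x, hx, rfl⟩; exact hbound t ⟨ht.1, le_rfl⟩ x hx)
    (add_nonneg (mul_nonneg hG0 (exp_pos _).le)
      (integral_nonneg ht.1 fun s _ => mul_nonneg (hFpos s) (exp_pos _).le))

/-- Lemma 3.1: maximum principle with zero-order term and forcing:
if `D_t v ≤ Lv + C v̄₊ + F` on `[0,T]×Q°`, then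
`v̄(t) ≤ G(t) e^{νt} + ∫₀ᵗ F(s) e^{ν(t−s)} ds`. -/
theorem discrete_maximum_principle_with_forcing (d : ℕ)
    (Λ₁ : Finset (Fin d → ℝ)) (h0 : (0 : Fin d → ℝ) ∉ Λ₁)
    (h T : ℝ) (hh : 0 < h) (hT : 0 < T)
    (Q : Set (Fin d → ℝ)) (hQ : Q.Nonempty)
    (Qo : Set (Fin d → ℝ))
    (hQo : Qo = {x ∈ Q | ∀ lam ∈ Λ₁, x + h • lam ∈ Q})
    (χ : (Fin d → ℝ) → ℝ → (Fin d → ℝ) → ℝ)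
    (hχpos : ∀ lam ∈ Λ₁, ∀ t x, 0 ≤ χ lam t x)
    (hχbdd : ∃ M, ∀ lam ∈ Λ₁, ∀ t x, |χ lam t x| ≤ M)
    (hχmeas : ∀ lam ∈ Λ₁, Measurable (Function.uncurry (χ lam)))
    (cc : ℝ → (Fin d → ℝ) → ℝ)
    (hcbdd : ∃ M, ∀ t x, |cc t x| ≤ M)
    (hcmeas : Measurable (Function.uncurry cc))
    (C : ℝ → (Fin d → ℝ) → ℝ)
    (hCpos : ∀ t x, 0 ≤ C t x) (hCbdd : ∃ M, ∀ t x, |C t x| ≤ M)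
    (F : ℝ → ℝ) (hFpos : ∀ t, 0 ≤ F t)
    (hFint : IntervalIntegrable F MeasureTheory.volume 0 T)
    (v : ℝ → (Fin d → ℝ) → ℝ)
    (hvbdd : ∃ M, ∀ t ∈ Icc (0:ℝ) T, ∀ x ∈ Q, |v t x| ≤ M)
    (hvmeas : ∀ x, Measurable fun t => v t x)
    (v' : ℝ → (Fin d → ℝ) → ℝ)
    (hderiv : ∀ t ∈ Icc (0:ℝ) T, ∀ x ∈ Qo, HasDerivAt (fun s => v s x) (v' t x) t)
    (vbar : ℝ → ℝ) (hvbar : ∀ t, vbar t = sSup ((v t) '' Q))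
    (hineq : ∀ t ∈ Icc (0:ℝ) T, ∀ x ∈ Qo,
      v' t x ≤ h⁻¹ * ∑ lam ∈ Λ₁, χ lam t x * ((v t (x + h • lam) - v t x) / h)
              - cc t x * v t x + C t x * max (vbar t) 0 + F t)
    (ν : ℝ)
    (hν : ν = sSup ((fun p : ℝ × (Fin d → ℝ) => C p.1 p.2 - cc p.1 p.2) ''
        (Icc (0:ℝ) T ×ˢ Qo)))
    (G : ℝ → ℝ)
    (hG : ∀ t, G t = sSup ((fun p : ℝ × (Fin d → ℝ) =>
        Real.exp (-ν * p.1) * max (v p.1 p.2) 0) ''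
        (({0} ×ˢ Q) ∪ (Icc (0:ℝ) t ×ˢ (Q \ Qo))))) :
    ∀ t ∈ Icc (0:ℝ) T,
      vbar t ≤ G t * Real.exp (ν * t)
        + ∫ s in (0:ℝ)..t, F s * Real.exp (ν * (t - s)) :=
  discrete_maximum_principle_with_forcing_general d Λ₁ h T hh Q Qo hQo χ hχpos hχbdd cc hcbdd C
    hCpos hCbdd F hFpos hFint v hvbdd v' hderiv vbar hvbar hineq ν hν G hG
end
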